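/- For every natural number k ≥ 2, k/(e(k−1)) − (1/(e^k (k−1))) · ∑_{r'=0}^{k−1} ∑_{i=0}^{r'} (k−1)^i / i! ≥ (1/e)·(1 − √(k−1) / ((k+1)·√(2π))), where e is Euler's number, π is the circle constant, and all arithmetic is over the real numbers. -/

import Mathlib

/-!
Put `m = k - 1` and let `S = ∑_{r ≤ m} ∑_{i ≤ r} m^i / i!`; clearing denominators, the claim
becomes `S ≤ e^m (1 + m^2 / ((m + 2) √(2πm)))`. Exchanging the order of summation and telescoping
`∑_{i ≤ n} (m - i) m^i / i! = m^(n+1) / n!` gives `S = ∑_{i < m} m^i / i! + (m + 1) m^m / m!`.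
The first sum is at most `e^m / 2`: its term at `i = m - 1 - j` is dominated by the term at `m + j`
because `(m - j) ⋯ (m + j) ≤ m^(2j+1)`, so it is at most the sum over `m ≤ i < 2m`. The second term
is bounded by Stirling's lower bound `m! ≥ √(2πm) (m/e)^m`. Together these suffice for `m ≥ 4`;
the cases `m ≤ 3` are numerical.
-/

open Finset Real
open scoped Nat

theorem factorial_add_two_mul_add_one_le (n t : ℕ) :
    (n + (2 * t + 1))! ≤ (n + t + 1) ^ (2 * t + 1) * n ! := by
  induction t generalizing n with
  | zero => simp [Nat.factorial_succ]
  | succ t ih =>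
    -- the two new outer factors satisfy `(M + s) (M - s) ≤ M ^ 2` with `M = n + t + 2`
    have hpair : (n + 2 * t + 3) * (n + 1) ≤ (n + t + 2) ^ 2 := by nlinarith
    calc (n + (2 * (t + 1) + 1))! = (n + 2 * t + 3) * (n + 1 + (2 * t + 1))! := by
          rw [show n + (2 * (t + 1) + 1) = n + 1 + (2 * t + 1) + 1 by ring, Nat.factorial_succ]
          ring_nf
      _ ≤ (n + 2 * t + 3) * ((n + t + 2) ^ (2 * t + 1) * (n + 1)!) := by
          gcongr; simpa [add_right_comm] using ih (n + 1)
      _ = (n + 2 * t + 3) * (n + 1) * (n + t + 2) ^ (2 * t + 1) * n ! := by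
          rw [Nat.factorial_succ]; ring
      _ ≤ (n + t + 2) ^ 2 * (n + t + 2) ^ (2 * t + 1) * n ! := by gcongr
      _ = (n + (t + 1) + 1) ^ (2 * (t + 1) + 1) * n ! := by ring

theorem sum_range_pow_div_factorial_le_exp_div_two (m : ℕ) :
    ∑ i ∈ range m, (m : ℝ) ^ i / i ! ≤ exp m / 2 := by
  set f : ℕ → ℝ := fun i ↦ (m : ℝ) ^ i / (i ! : ℝ)
  have hpair : ∀ j ∈ range m, f (m - 1 - j) ≤ f (m + j) := by
    intro j hj
    obtain ⟨n, rfl⟩ : ∃ n, m = n + j + 1 := ⟨m - j - 1, by grind⟩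
    simp only [f, show n + j + 1 - 1 - j = n by omega, show n + j + 1 + j = n + (2 * j + 1) by ring]
    rw [div_le_div_iff₀ (by positivity) (by positivity), pow_add]
    have hfac := factorial_add_two_mul_add_one_le n j
    calc ((n + j + 1 : ℕ) : ℝ) ^ n * ((n + (2 * j + 1))! : ℕ)
        ≤ ((n + j + 1 : ℕ) : ℝ) ^ n * (((n + j + 1) ^ (2 * j + 1) * n ! : ℕ) : ℝ) :=
          mul_le_mul_of_nonneg_left (by exact_mod_cast hfac) (by positivity)
      _ = _ := by push_cast; ring
  have hlow : ∑ i ∈ range m, f i ≤ ∑ j ∈ range m, f (m + j) := by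
    rw [← sum_range_reflect f m]
    exact sum_le_sum hpair
  have hexp : ∑ i ∈ range (m + m), f i ≤ exp m := sum_le_exp_of_nonneg (by positivity) _
  rw [sum_range_add] at hexp
  linarith

theorem self_pow_div_factorial_le_stirling {m : ℕ} (hm : m ≠ 0) :
    (m : ℝ) ^ m / m ! ≤ exp 1 ^ m / √(2 * π * m) := by
  have hstirling := Stirling.le_factorial_stirling m
  rw [div_pow] at hstirling
  rw [div_le_div_iff₀ (by positivity) (by positivity)]
  calc (m : ℝ) ^ m * √(2 * π * m) = exp 1 ^ m * (√(2 * π * m) * ((m : ℝ) ^ m / exp 1 ^ m)) := by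
        field_simp
    _ ≤ exp 1 ^ m * m ! := by gcongr

theorem sum_range_sum_range_succ {R : Type*} [CommRing R] (f : ℕ → R) (K : ℕ) :
    ∑ r ∈ range K, ∑ i ∈ range (r + 1), f i = ∑ i ∈ range K, ((K : R) - i) * f i := by
  induction K with
  | zero => simp
  | succ K ih =>
    rw [sum_range_succ, ih, sum_range_succ f K, sum_range_succ _ K]
    simp only [Nat.cast_succ, add_sub_right_comm _ (1 : R), add_mul, one_mul, sum_add_distrib]
    ring

theorem sum_range_succ_sub_mul_pow_div_factorial (x : ℝ) (n : ℕ) :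
    ∑ i ∈ range (n + 1), (x - i) * (x ^ i / i !) = x * (x ^ n / n !) := by
  induction n with
  | zero => simp
  | succ n ih =>
    rw [sum_range_succ, ih, Nat.factorial_succ]
    push_cast
    field_simp
    ring

theorem sum_range_sum_range_succ_pow_div_factorial (m : ℕ) :
    ∑ r ∈ range (m + 1), ∑ i ∈ range (r + 1), (m : ℝ) ^ i / i !
      = ∑ i ∈ range m, (m : ℝ) ^ i / i ! + (m + 1) * ((m : ℝ) ^ m / m !) := by
  have htel := sum_range_succ_sub_mul_pow_div_factorial m m
  rw [sum_range_sum_range_succ]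
  simp only [Nat.cast_succ, add_sub_right_comm _ (1 : ℝ), add_mul, one_mul, sum_add_distrib]
  rw [htel, sum_range_succ]
  ring

theorem two_mul_three_mul_add_two_le {x : ℝ} (hx : 4 ≤ x) :
    2 * (3 * x + 2) ≤ (x + 2) * √(2 * π * x) := by
  rw [← sqrt_sq (by linarith : 0 ≤ x + 2), ← sqrt_mul (by positivity),
    le_sqrt (by linarith) (by positivity)]
  have hx0 : 0 ≤ x := by linarith
  have hπ : 0 ≤ (x + 2) ^ 2 * x * (π - 3) := mul_nonneg (by positivity) (sub_nonneg.2 pi_gt_three.le)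
  nlinarith [mul_nonneg (mul_nonneg (sub_nonneg.2 hx) hx0) hx0]

theorem le_exp_one_pow_mul_of_le {S a b : ℝ} {m : ℕ} (hm : m ≠ 0) (ha : 0 ≤ a) (hae : a ≤ exp 1)
    (hb : 2 * π * m ≤ b ^ 2) (hb0 : 0 < b) (h : S ≤ a ^ m * (1 + m ^ 2 / ((m + 2) * b))) :
    S ≤ exp 1 ^ m * (1 + m ^ 2 / ((m + 2) * √(2 * π * m))) := by
  have hsqrt : √(2 * π * m) ≤ b := (sqrt_le_left hb0.le).2 hb
  calc S ≤ a ^ m * (1 + m ^ 2 / ((m + 2) * b)) := h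
    _ ≤ exp 1 ^ m * (1 + m ^ 2 / ((m + 2) * √(2 * π * m))) := by gcongr

theorem sum_range_sum_range_succ_pow_div_factorial_le_of_four_le {m : ℕ} (hm : 4 ≤ m) :
    ∑ r ∈ range (m + 1), ∑ i ∈ range (r + 1), (m : ℝ) ^ i / i !
      ≤ exp 1 ^ m * (1 + m ^ 2 / ((m + 2) * √(2 * π * m))) := by
  have hhalf := sum_range_pow_div_factorial_le_exp_div_two m
  have hstirling := self_pow_div_factorial_le_stirling (by omega : m ≠ 0)
  have hgap := two_mul_three_mul_add_two_le (x := m) (by exact_mod_cast hm)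
  rw [← exp_one_pow] at hhalf
  set E := exp 1 ^ m
  set c := √(2 * π * m)
  have hc : 0 < c := by positivity
  rw [sum_range_sum_range_succ_pow_div_factorial, ← sub_nonneg]
  have hdiff : E * (1 + m ^ 2 / ((m + 2) * c)) - (E / 2 + (m + 1) * (E / c))
      = E * ((m + 2) * c - 2 * (3 * m + 2)) / (2 * (m + 2) * c) := by
    field_simp
    ring
  have hgoal : 0 ≤ E * (1 + m ^ 2 / ((m + 2) * c)) - (E / 2 + (m + 1) * (E / c)) := by
    rw [hdiff]
    exact div_nonneg (mul_nonneg (by positivity) (by linarith)) (by positivity)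
  have : (m + 1) * ((m : ℝ) ^ m / m !) ≤ (m + 1) * (E / c) := by gcongr
  linarith

theorem sum_range_sum_range_succ_pow_div_factorial_le {m : ℕ} (hm : m ≠ 0) :
    ∑ r ∈ range (m + 1), ∑ i ∈ range (r + 1), (m : ℝ) ^ i / i !
      ≤ exp 1 ^ m * (1 + m ^ 2 / ((m + 2) * √(2 * π * m))) := by
  obtain h4 | hlt := le_or_gt 4 m
  · exact sum_range_sum_range_succ_pow_div_factorial_le_of_four_le h4
  have he := exp_one_gt_d9.le
  have hπ := pi_lt_d2.le
  have hpos := Nat.pos_of_ne_zero hm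
  interval_cases m
  · exact le_exp_one_pow_mul_of_le (a := 2.718) (b := 2.51) hm (by norm_num) (by linarith)
      (by norm_num; linarith) (by norm_num) (by norm_num [sum_range_succ, Nat.factorial])
  · exact le_exp_one_pow_mul_of_le (a := 2.718) (b := 3.55) hm (by norm_num) (by linarith)
      (by norm_num; linarith) (by norm_num) (by norm_num [sum_range_succ, Nat.factorial])
  · exact le_exp_one_pow_mul_of_le (a := 2.718) (b := 4.35) hm (by norm_num) (by linarith)
      (by norm_num; linarith) (by norm_num) (by norm_num [sum_range_succ, Nat.factorial])

/-- The analytic core of Theorem 1 of the paper. -/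
theorem competitive_ratio_bound (k : ℕ) (hk : 2 ≤ k) :
    (k : ℝ) / (Real.exp 1 * ((k : ℝ) - 1))
      - 1 / (Real.exp 1 ^ k * ((k : ℝ) - 1)) *
          ∑ r' ∈ Finset.range k, ∑ i ∈ Finset.range (r' + 1),
            ((k : ℝ) - 1) ^ i / (Nat.factorial i) ≥
      1 / Real.exp 1 *
        (1 - Real.sqrt ((k : ℝ) - 1) / (((k : ℝ) + 1) * Real.sqrt (2 * Real.pi))) := by
  obtain ⟨m, rfl⟩ : ∃ m, k = m + 1 := ⟨k - 1, by omega⟩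
  have hm : m ≠ 0 := by omega
  have hm0 : (0 : ℝ) < m := by positivity
  push_cast
  simp only [add_sub_cancel_right]
  have hsqrt : √(2 * π * m) = √(2 * π) * √m := sqrt_mul (by positivity) _
  have hsq : (m : ℝ) = √m ^ 2 := (sq_sqrt hm0.le).symm
  calc (m + 1) / (exp 1 * m) - 1 / (exp 1 ^ (m + 1) * m) *
          ∑ r ∈ range (m + 1), ∑ i ∈ range (r + 1), (m : ℝ) ^ i / i !
      ≥ (m + 1) / (exp 1 * m) - 1 / (exp 1 ^ (m + 1) * m) *
          (exp 1 ^ m * (1 + m ^ 2 / ((m + 2) * √(2 * π * m)))) := by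
        gcongr
        exact sum_range_sum_range_succ_pow_div_factorial_le hm
    _ = 1 / exp 1 * (1 - √m / ((m + 1 + 1) * √(2 * π))) := by
        rw [hsqrt, pow_succ]
        have hs : 0 < √(m : ℝ) := sqrt_pos.2 hm0
        set s := √(m : ℝ)
        rw [hsq]
        field_simp
        ring
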